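/- Let 0 < ρ_c ≤ 1/2 and J > 0. Define f(ρ) = J·min(ρ/ρ_c, (1−ρ)/ρ_c, 1) on [0,1] and k(x) = (−x)·1_{x < −J/ρ_c} + (J − (1−ρ_c)x)·1_{−J/ρ_c ≤ x < 0} + (J − ρ_c·x)·1_{0 ≤ x < J/ρ_c} for x ∈ ℝ (and k(x)=0 for x ≥ J/ρ_c). Then f(ρ) = inf_{x ∈ ℝ} [k(x) + x·ρ] for all ρ ∈ [0,1]. -/
import Mathlib


theorem stmt_17 (ρc J : ℝ) (hρ0 : 0 < ρc) (hρ : ρc ≤ 1 / 2) (hJ : 0 < J)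
    (f k : ℝ → ℝ)
    (hf : ∀ ρ, f ρ = J * min (ρ / ρc) (min ((1 - ρ) / ρc) 1))
    (hk : ∀ x : ℝ, k x =
      if x < -J / ρc then -x
      else if x < 0 then J - (1 - ρc) * x
      else if x < J / ρc then J - ρc * x
      else 0) :
    ∀ ρ ∈ Set.Icc (0:ℝ) 1, IsGLB (Set.range fun x : ℝ => k x + x * ρ) (f ρ) := by
  intro ρ hmem
  obtain ⟨h0, h1⟩ := hmem
  set a := J / ρc with ha_def
  have hane : -J / ρc = -a := by rw [neg_div]
  have ha : a * ρc = J := div_mul_cancel₀ _ hρ0.ne'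
  have hapos : 0 < a := div_pos hJ hρ0
  -- bounds on the min
  have hm1 : ρc * min (ρ / ρc) (min ((1 - ρ) / ρc) 1) ≤ ρ := by
    have := min_le_left (ρ / ρc) (min ((1 - ρ) / ρc) 1)
    nlinarith [div_mul_cancel₀ ρ hρ0.ne']
  have hm2 : ρc * min (ρ / ρc) (min ((1 - ρ) / ρc) 1) ≤ 1 - ρ := by
    have := le_trans (min_le_right (ρ / ρc) (min ((1 - ρ) / ρc) 1))
      (min_le_left ((1 - ρ) / ρc) 1)
    nlinarith [div_mul_cancel₀ (1 - ρ) hρ0.ne']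
  have hm3 : min (ρ / ρc) (min ((1 - ρ) / ρc) 1) ≤ 1 :=
    le_trans (min_le_right _ _) (min_le_right _ _)
  apply IsLeast.isGLB
  constructor
  · -- membership : the infimum is attained
    rcases le_or_gt ρ ρc with hc | hc
    · refine ⟨a, ?_⟩
      have hA : ρ / ρc ≤ (1 - ρ) / ρc := by gcongr <;> linarith
      have hB : ρ / ρc ≤ 1 := by rw [div_le_one hρ0]; linarith
      have hmin : min (ρ / ρc) (min ((1 - ρ) / ρc) 1) = ρ / ρc :=
        min_eq_left (le_min hA hB)
      show k a + a * ρ = f ρ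
      rw [hk, hf, hmin, if_neg (by rw [hane]; linarith), if_neg (by linarith),
        if_neg (by linarith), ha_def]
      ring
    · rcases le_or_gt (1 - ρc) ρ with hc2 | hc2
      · refine ⟨-a, ?_⟩
        have hA : (1 - ρ) / ρc ≤ ρ / ρc := by gcongr <;> linarith
        have hB : (1 - ρ) / ρc ≤ 1 := by rw [div_le_one hρ0]; linarith
        have hmin : min (ρ / ρc) (min ((1 - ρ) / ρc) 1) = (1 - ρ) / ρc := by
          rw [min_eq_left hB, min_eq_right hA]
        show k (-a) + (-a) * ρ = f ρ
        rw [hk, hf, hmin, if_neg (by rw [hane]; linarith), if_pos (by linarith), ha_def]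
        field_simp
        ring
      · refine ⟨0, ?_⟩
        have hA : (1:ℝ) ≤ (1 - ρ) / ρc := by rw [le_div_iff₀ hρ0]; linarith
        have hB : (1:ℝ) ≤ ρ / ρc := by rw [le_div_iff₀ hρ0]; linarith
        have hmin : min (ρ / ρc) (min ((1 - ρ) / ρc) 1) = 1 := by
          rw [min_eq_right hA, min_eq_right hB]
        show k 0 + 0 * ρ = f ρ
        rw [hk, hf, hmin, if_neg (by rw [hane]; linarith), if_neg (by linarith),
          if_pos (by linarith)]
        ring
  · -- lower bound
    rintro _ ⟨x, rfl⟩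
    simp only
    rw [hk, hf, hane]
    split_ifs with hb1 hb2 hb3
    · -- x < -a
      nlinarith [mul_nonneg (by linarith : (0:ℝ) ≤ -a - x) (by linarith : (0:ℝ) ≤ 1 - ρ),
        mul_le_mul_of_nonneg_left hm2 hapos.le]
    · -- -a ≤ x < 0
      rcases le_or_gt (ρ + ρc) 1 with hs | hs
      · nlinarith [mul_nonneg (by linarith : (0:ℝ) ≤ -x) (by linarith : (0:ℝ) ≤ 1 - ρ - ρc)]
      · nlinarith [mul_nonneg (by linarith : (0:ℝ) ≤ x + a) (by linarith : (0:ℝ) ≤ ρ + ρc - 1),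
          mul_le_mul_of_nonneg_left hm2 hapos.le]
    · -- 0 ≤ x < a
      rcases le_or_gt ρc ρ with hs | hs
      · nlinarith [mul_nonneg (by linarith : (0:ℝ) ≤ x) (by linarith : (0:ℝ) ≤ ρ - ρc)]
      · nlinarith [mul_nonneg (by linarith : (0:ℝ) ≤ a - x) (by linarith : (0:ℝ) ≤ ρc - ρ),
          mul_le_mul_of_nonneg_left hm1 hapos.le]
    · -- x ≥ a
      nlinarith [mul_nonneg (by linarith : (0:ℝ) ≤ x - a) h0,
        mul_le_mul_of_nonneg_left hm1 hapos.le]
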